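/- Let d ≥ 1 and k ∈ {1,...,d}, and set γ = kβ − (d+1)(k−1)/2 for β > d/2. Then c̃_{d,β}^k · B(d,k) · S_{k,β}(d−k) / c̃_{d−k+1,γ} = 1, where c̃_{m,β} = Γ(β)/(π^{m/2}Γ(β−m/2)), B(d,k) = ((k−1)!)^{d−k+1} · (ω_{d−k+2}···ω_d)/(ω_1···ω_{k−1}) with ω_ℓ = 2π^{ℓ/2}/Γ(ℓ/2) (and B(d,1) = 1), and S_{k,β}(d−k) is the value at b = d−k of S_{k,β}(b) = (c̃_{k−1,β})^{−k}/((k−1)!)^{b+1} · [Γ(k(β−(k−1)/2) − (k−1)(b+1)/2)/Γ(k(β−(k+b)/2))] · [Γ(β−(k+b)/2)/Γ(β−(k−1)/2)]^k · Π_{i=1}^{k−1} Γ((i+b+1)/2)/Γ(i/2). -/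

import Mathlib

open Real Finset

/-- `c̃_{m,β} = Γ(β)/(π^{m/2} Γ(β − m/2))`. -/
noncomputable def ctilde (m : ℕ) (β : ℝ) : ℝ :=
  Real.Gamma β / (Real.pi ^ ((m : ℝ) / 2) * Real.Gamma (β - (m : ℝ) / 2))

/-- `ω_ℓ = 2π^{ℓ/2}/Γ(ℓ/2)`, the surface area of the unit sphere in `ℝ^ℓ`. -/
noncomputable def omegaSurf (ℓ : ℕ) : ℝ :=
  2 * Real.pi ^ ((ℓ : ℝ) / 2) / Real.Gamma ((ℓ : ℝ) / 2)

/-- The Blaschke–Petkantschin constant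
`B(d,k) = ((k−1)!)^{d−k+1} (ω_{d−k+2}⋯ω_d)/(ω_1⋯ω_{k−1})`. -/
noncomputable def Bconst (d k : ℕ) : ℝ :=
  ((Nat.factorial (k - 1) : ℝ)) ^ (d - k + 1) *
    (∏ ℓ ∈ Finset.Icc (d - k + 2) d, omegaSurf ℓ) /
    (∏ ℓ ∈ Finset.Icc 1 (k - 1), omegaSurf ℓ)

/-- The moment constant `S_{k,β}(b)` of the beta' simplex, from the expected
`T`-functional formula. -/
noncomputable def Sconst (k : ℕ) (β b : ℝ) : ℝ :=
  (ctilde (k - 1) β)⁻¹ ^ k / ((Nat.factorial (k - 1) : ℝ)) ^ (b + 1) *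
    (Real.Gamma ((k : ℝ) * (β - ((k : ℝ) - 1) / 2) - ((k : ℝ) - 1) * (b + 1) / 2) /
      Real.Gamma ((k : ℝ) * (β - ((k : ℝ) + b) / 2))) *
    (Real.Gamma (β - ((k : ℝ) + b) / 2) / Real.Gamma (β - ((k : ℝ) - 1) / 2)) ^ k *
    ∏ i ∈ Finset.Icc 1 (k - 1), Real.Gamma (((i : ℝ) + b + 1) / 2) / Real.Gamma ((i : ℝ) / 2)

lemma prod_key (b n : ℕ) :
    (∏ ℓ ∈ Finset.Icc (b + 2) (b + 1 + n), omegaSurf ℓ) /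
      (∏ ℓ ∈ Finset.Icc 1 n, omegaSurf ℓ) *
      ∏ i ∈ Finset.Icc 1 n, Real.Gamma (((i : ℝ) + (b : ℝ) + 1) / 2) / Real.Gamma ((i : ℝ) / 2)
    = (Real.pi ^ (((b : ℝ) + 1) / 2)) ^ n := by
  have h1 : Finset.Icc (b + 2) (b + 1 + n) = Finset.map (addLeftEmbedding (b + 1)) (Finset.Icc 1 n) := by
    rw [Finset.map_add_left_Icc]
  have hcard : (Finset.Icc 1 n).card = n := by rw [Nat.card_Icc]; omega
  rw [h1, Finset.prod_map, div_mul_eq_mul_div, ← Finset.prod_mul_distrib,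
    ← Finset.prod_div_distrib]
  conv_rhs => rw [← hcard, ← Finset.prod_const]
  refine Finset.prod_congr rfl fun i hi => ?_
  have hi1 : 1 ≤ i := (Finset.mem_Icc.mp hi).1
  have hi0 : (0:ℝ) < (i : ℝ) / 2 := by positivity
  have hg1 : Real.Gamma ((i : ℝ) / 2) ≠ 0 := (Real.Gamma_pos_of_pos hi0).ne'
  have hx : ((addLeftEmbedding (b + 1)) i : ℕ) = b + 1 + i := rfl
  rw [hx]
  have hcast : (((b + 1 + i : ℕ)) : ℝ) = (i : ℝ) + (b : ℝ) + 1 := by push_cast; ring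
  unfold omegaSurf
  rw [hcast]
  have hg2 : Real.Gamma (((i:ℝ) + b + 1) / 2) ≠ 0 := by
    refine (Real.Gamma_pos_of_pos ?_).ne'
    positivity
  have hpi : Real.pi ^ ((i : ℝ) / 2) ≠ 0 := by positivity
  field_simp
  rw [show ((i:ℝ) + b + 1)/2 = ((b:ℝ)+1)/2 + (i:ℝ)/2 by ring, Real.rpow_add pi_pos]
  ring

/-- The normalizing-constant identity in the canonical decomposition of beta* measures:
for `1 ≤ k ≤ d`, `β > d/2` and `γ = kβ − (d+1)(k−1)/2`,
`c̃_{d,β}^k · B(d,k) · S_{k,β}(d−k) / c̃_{d−k+1,γ} = 1`. -/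
theorem canonical_decomposition_constant (d k : ℕ) (hd : 1 ≤ d) (hk1 : 1 ≤ k) (hkd : k ≤ d)
    (β : ℝ) (hβ : β > (d : ℝ) / 2) :
    (ctilde d β) ^ k * Bconst d k * Sconst k β ((d : ℝ) - (k : ℝ)) /
        ctilde (d - k + 1) ((k : ℝ) * β - ((d : ℝ) + 1) * ((k : ℝ) - 1) / 2)
      = 1 := by
  obtain ⟨n, rfl⟩ : ∃ n, k = n + 1 := ⟨k - 1, by omega⟩
  obtain ⟨b, hd'⟩ : ∃ b, d = b + 1 + n := ⟨d - (n + 1), by omega⟩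
  subst hd'
  have hDK : ((b + 1 + n : ℕ) : ℝ) - ((n + 1 : ℕ) : ℝ) = (b : ℝ) := by push_cast; ring
  have hsimp1 : b + 1 + n - (n + 1) = b := by omega
  have hsimp2 : n + 1 - 1 = n := by omega
  rw [hDK]
  unfold Bconst Sconst
  rw [hsimp1, hsimp2]
  -- rewrite the rpow of factorial as npow
  have hfact : ((Nat.factorial n : ℝ)) ^ ((b : ℝ) + 1) = ((Nat.factorial n : ℝ)) ^ (b + 1) := by
    rw [show ((b:ℝ) + 1) = ((b + 1 : ℕ) : ℝ) by push_cast; ring, Real.rpow_natCast]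
  rw [hfact]
  -- Gamma-argument normalizations
  set D : ℝ := ((b + 1 + n : ℕ) : ℝ) with hD
  set K : ℝ := ((n + 1 : ℕ) : ℝ) with hK
  have hDval : D = (b : ℝ) + 1 + (n : ℝ) := by rw [hD]; push_cast; ring
  have hKval : K = (n : ℝ) + 1 := by rw [hK]; push_cast; ring
  have harg1 : K * (β - (K - 1) / 2) - (K - 1) * ((b : ℝ) + 1) / 2
      = K * β - (D + 1) * (K - 1) / 2 := by rw [hDval, hKval]; ring
  have harg2 : K * (β - (K + (b : ℝ)) / 2) = K * (β - D / 2) := by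
    rw [hDval, hKval]; ring
  have harg3 : β - (K + (b : ℝ)) / 2 = β - D / 2 := by rw [hDval, hKval]; ring
  rw [harg1, harg2, harg3]
  unfold ctilde
  have harg4 : K * β - (D + 1) * (K - 1) / 2 - ((b + 1 : ℕ) : ℝ) / 2 = K * (β - D / 2) := by
    rw [hDval, hKval]; push_cast; ring
  rw [harg4]
  -- nonvanishing
  have hβ0 : (0:ℝ) < β := lt_of_le_of_lt (by positivity) hβ
  have hA : Real.Gamma β ≠ 0 := (Real.Gamma_pos_of_pos hβ0).ne'
  have hB1pos : (0:ℝ) < β - D / 2 := by rw [hDval] at hβ ⊢; linarith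
  have hB1 : Real.Gamma (β - D / 2) ≠ 0 := (Real.Gamma_pos_of_pos hB1pos).ne'
  have hB2 : Real.Gamma (β - ((n:ℕ) : ℝ) / 2) ≠ 0 := by
    refine (Real.Gamma_pos_of_pos ?_).ne'
    have : ((n:ℕ):ℝ) / 2 ≤ D / 2 := by rw [hDval]; push_cast; linarith [Nat.cast_nonneg (α := ℝ) b]
    linarith
  have hKpos : (0:ℝ) < K := by rw [hKval]; positivity
  have hC : Real.Gamma (K * β - (D + 1) * (K - 1) / 2) ≠ 0 := by
    refine (Real.Gamma_pos_of_pos ?_).ne'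
    have h1 : K * β > K * (D / 2) := by exact mul_lt_mul_of_pos_left hβ hKpos
    have h2 : K ≤ D := by rw [hDval, hKval]; linarith [Nat.cast_nonneg (α := ℝ) b]
    nlinarith [hKpos]
  have hE : Real.Gamma (K * (β - D / 2)) ≠ 0 := by
    refine (Real.Gamma_pos_of_pos ?_).ne'
    positivity
  have hF : ((Nat.factorial n : ℝ)) ≠ 0 := by positivity
  have hpd : Real.pi ^ (D / 2) ≠ 0 := by positivity
  have hpn : Real.pi ^ (((n:ℕ) : ℝ) / 2) ≠ 0 := by positivity
  have hpb1 : Real.pi ^ (((b + 1 : ℕ) : ℝ) / 2) ≠ 0 := by positivity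
  -- key pi-power identity
  have hpi : (Real.pi ^ (((n:ℕ) : ℝ) / 2)) ^ (n + 1) * (Real.pi ^ (((b : ℝ) + 1) / 2)) ^ n
        * Real.pi ^ (((b + 1 : ℕ) : ℝ) / 2)
      = (Real.pi ^ (D / 2)) ^ (n + 1) := by
    rw [← Real.rpow_natCast (Real.pi ^ (((n:ℕ) : ℝ) / 2)) (n+1),
      ← Real.rpow_natCast (Real.pi ^ (((b : ℝ) + 1) / 2)) n,
      ← Real.rpow_natCast (Real.pi ^ (D / 2)) (n+1),
      ← Real.rpow_mul pi_pos.le, ← Real.rpow_mul pi_pos.le, ← Real.rpow_mul pi_pos.le,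
      ← Real.rpow_add pi_pos, ← Real.rpow_add pi_pos]
    congr 1
    rw [hDval]; push_cast; ring
  -- reorganize to apply prod_key
  have key := prod_key b n
  -- now pure algebra
  rw [← hD]
  have harg5 : β - (K - 1) / 2 = β - ((n:ℕ):ℝ) / 2 := by rw [hKval]; push_cast; ring
  rw [harg5]
  have hP2 : (0:ℝ) < ∏ ℓ ∈ Finset.Icc 1 n, omegaSurf ℓ := by
    refine Finset.prod_pos fun ℓ hℓ => ?_
    have h1 : 1 ≤ ℓ := (Finset.mem_Icc.mp hℓ).1
    unfold omegaSurf
    have : (0:ℝ) < Real.Gamma ((ℓ:ℝ)/2) := Real.Gamma_pos_of_pos (by positivity)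
    positivity
  have hP3 : (0:ℝ) < ∏ i ∈ Finset.Icc 1 n, Real.Gamma (((i:ℝ) + (b:ℝ) + 1) / 2) / Real.Gamma ((i:ℝ) / 2) := by
    refine Finset.prod_pos fun ℓ hℓ => ?_
    have h1 : 1 ≤ ℓ := (Finset.mem_Icc.mp hℓ).1
    have h2 : (0:ℝ) < Real.Gamma ((ℓ:ℝ)/2) := Real.Gamma_pos_of_pos (by positivity)
    have h3 : (0:ℝ) < Real.Gamma (((ℓ:ℝ) + (b:ℝ) + 1)/2) := Real.Gamma_pos_of_pos (by positivity)
    positivity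
  set P1 : ℝ := ∏ ℓ ∈ Finset.Icc (b + 2) (b + 1 + n), omegaSurf ℓ with hP1def
  set P2 : ℝ := ∏ ℓ ∈ Finset.Icc 1 n, omegaSurf ℓ with hP2def
  set P3 : ℝ := ∏ i ∈ Finset.Icc 1 n, Real.Gamma (((i:ℝ) + (b:ℝ) + 1) / 2) / Real.Gamma ((i:ℝ) / 2) with hP3def
  set A : ℝ := Real.Gamma β
  set B1 : ℝ := Real.Gamma (β - D / 2)
  set B2 : ℝ := Real.Gamma (β - ((n:ℕ):ℝ) / 2)
  set C : ℝ := Real.Gamma (K * β - (D + 1) * (K - 1) / 2)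
  set E : ℝ := Real.Gamma (K * (β - D / 2))
  set Fc : ℝ := ((Nat.factorial n : ℝ))
  set pd : ℝ := Real.pi ^ (D / 2)
  set pn : ℝ := Real.pi ^ (((n:ℕ):ℝ) / 2)
  set pb1 : ℝ := Real.pi ^ (((b + 1 : ℕ):ℝ) / 2)
  set pp : ℝ := Real.pi ^ (((b:ℝ) + 1) / 2)
  have hkey2 : P1 * P3 = pp ^ n * P2 := by
    rw [← key, div_mul_eq_mul_div, div_mul_cancel₀ _ hP2.ne']
  have hP1eq : P1 = pp ^ n * P2 / P3 := by
    rw [eq_div_iff hP3.ne', hkey2]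
  rw [hP1eq]
  have hFc : Fc ≠ 0 := hF
  field_simp
  rw [div_pow, div_pow, div_pow, mul_pow, mul_pow]
  field_simp
  linear_combination hpi
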